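/- Suppose y = (a,b,c) ∈ ℍⁿ with a, b ∈ ℝⁿ, c ∈ ℝ and p(y) ≠ 0; let L = |p(y)| = |(a,b)|. Define γ : [0,1] → ℍⁿ by γ(t) = t(a − bc/L², b + ac/L², 0) for 0 ≤ t ≤ 1/2, and γ(t) = (1/2)(a − bc/L², b + ac/L², 0) + (t − 1/2)(a + bc/L², b − ac/L², 2c) for 1/2 < t ≤ 1. Then: (1) γ is a Lipschitz horizontal curve joining 0 to y; (2) Lip_ℍ(γ) ≤ L(1 + c²/L⁴ + 4c²/L²)^{1/2}; (3) for all t ∈ [0,1] \ {1/2}, γ'(t) exists and |γ'(t) − (a,b,0)| ≤ (|c|/L)(1 + 4L²)^{1/2}. -/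

import Mathlib

open MeasureTheory Filter Set

noncomputable section

/-- The underlying space of the Heisenberg group `ℍⁿ = ℝ^{2n+1}` with the Euclidean structure. -/
abbrev H (n : ℕ) : Type := EuclideanSpace ℝ (Fin (2*n+1))

namespace Heis

variable (n : ℕ)

/-- Index of the `i`-th coordinate of the first block `a ∈ ℝⁿ`. -/
def idx₁ (i : Fin n) : Fin (2*n+1) := ⟨i.1, by have := i.2; omega⟩

/-- Index of the `i`-th coordinate of the second block `b ∈ ℝⁿ`. -/
def idx₂ (i : Fin n) : Fin (2*n+1) := ⟨n + i.1, by have := i.2; omega⟩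

/-- Index of the last (vertical) coordinate `c`. -/
def idxc : Fin (2*n+1) := ⟨2*n, by omega⟩

/-- Projection `p : ℍⁿ → ℝ^{2n}` onto the first `2n` coordinates. -/
def proj (x : H n) : EuclideanSpace ℝ (Fin (2*n)) :=
  WithLp.toLp 2 <| fun k => x ⟨k.1, by have := k.2; omega⟩

/-- The Euclidean inner product. -/
def iprod {m : ℕ} (x y : EuclideanSpace ℝ (Fin m)) : ℝ := ∑ k, x k * y k

/-- The Heisenberg group law
`(a,b,c)·(a',b',c') = (a+a', b+b', c+c'−2(⟨a,b'⟩−⟨b,a'⟩))`. -/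
def Hmul (x y : H n) : H n := WithLp.toLp 2 <| fun k =>
  x k + y k - (if (k : ℕ) = 2*n then
    2 * ∑ i : Fin n, (x (idx₁ n i) * y (idx₂ n i) - x (idx₂ n i) * y (idx₁ n i)) else 0)

/-- Dilations `δ_r(a,b,c) = (ra, rb, r²c)`. -/
def dil (r : ℝ) (x : H n) : H n :=
  WithLp.toLp 2 <| fun k => if (k : ℕ) = 2*n then r^2 * x k else r * x k

/-- The horizontal vector field `X_i(a,b,c) = e_i + 2 b_i e_{2n+1}`. -/
def Xvf (i : Fin n) (x : H n) : H n :=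
  EuclideanSpace.single (idx₁ n i) 1 + (2 * x (idx₂ n i)) • EuclideanSpace.single (idxc n) 1

/-- The horizontal vector field `Y_i(a,b,c) = e_{n+i} − 2 a_i e_{2n+1}`. -/
def Yvf (i : Fin n) (x : H n) : H n :=
  EuclideanSpace.single (idx₂ n i) 1 - (2 * x (idx₁ n i)) • EuclideanSpace.single (idxc n) 1

/-- `E ∈ V = Span{X_i, Y_i : 1 ≤ i ≤ n}`. -/
def memV (E : H n → H n) : Prop :=
  ∃ q q' : Fin n → ℝ, ∀ x, E x = ∑ i, (q i • Xvf n i x + q' i • Yvf n i x)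

/-- The norm `ω` on `V` making `{X_i, Y_i}` orthonormal; equivalently `ω(E) = |p(E)|`. -/
def omega (E : H n → H n) : ℝ := ‖proj n (E 0)‖

/-- `γ` is absolutely continuous on `I`: differentiable a.e. on `I` and
`γ(t) − γ(s) = ∫_s^t γ'` for all `s, t ∈ I`. -/
def IsAC (I : Set ℝ) (γ : ℝ → H n) : Prop :=
  (∀ᵐ t ∂(volume.restrict I), DifferentiableAt ℝ γ t) ∧
  ∀ s ∈ I, ∀ t ∈ I, IntervalIntegrable (deriv γ) volume s t ∧
    γ t - γ s = ∫ u in s..t, deriv γ u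

/-- The pointwise horizontality condition
`γ'(t) = ∑ᵢ (hᵢ(t) Xᵢ(γ(t)) + h_{n+i}(t) Yᵢ(γ(t)))`. -/
def horizCondition (γ : ℝ → H n) (h : ℝ → Fin (2*n) → ℝ) (t : ℝ) : Prop :=
  deriv γ t = ∑ i : Fin n,
    (h t ⟨i.1, by have := i.2; omega⟩ • Xvf n i (γ t)
      + h t ⟨n + i.1, by have := i.2; omega⟩ • Yvf n i (γ t))

/-- `γ` satisfies the horizontality condition a.e. on `I` for some `h : I → ℝ^{2n}`. -/
def IsHorizontal (I : Set ℝ) (γ : ℝ → H n) : Prop :=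
  ∃ h : ℝ → Fin (2*n) → ℝ, ∀ᵐ t ∂(volume.restrict I), horizCondition n γ h t

/-- A horizontal curve: absolutely continuous and horizontal on `I`. -/
def IsHorizontalCurve (I : Set ℝ) (γ : ℝ → H n) : Prop :=
  IsAC n I γ ∧ IsHorizontal n I γ

/-- The horizontal length `L_ℍ(γ) = ∫_I |h| = ∫_I |(p ∘ γ)'|`. -/
def hLength (I : Set ℝ) (γ : ℝ → H n) : ℝ := ∫ t in I, ‖proj n (deriv γ t)‖

/-- The Carnot–Carathéodory distance:
the infimum of horizontal lengths of horizontal curves joining `x` to `y`. -/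
def ccDist (x y : H n) : ℝ :=
  sInf {L | ∃ (a b : ℝ) (γ : ℝ → H n), a < b ∧ IsHorizontalCurve n (Set.Icc a b) γ ∧
    γ a = x ∧ γ b = y ∧ L = hLength n (Set.Icc a b) γ}

/-- `f` is Lipschitz with respect to the Carnot–Carathéodory distance. -/
def LipschitzCC (f : H n → ℝ) : Prop :=
  ∃ K : ℝ, 0 ≤ K ∧ ∀ x y, |f x - f y| ≤ K * ccDist n x y

/-- The Lipschitz constant `Lip_ℍ(f)` with respect to the Carnot–Carathéodory distance. -/
def lipH (f : H n → ℝ) : ℝ :=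
  sInf {K | 0 ≤ K ∧ ∀ x y, |f x - f y| ≤ K * ccDist n x y}

/-- The directional derivative `Ef(x) = lim_{t→0} (f(x + tE(x)) − f(x))/t` exists and is `D`. -/
def HasDirDeriv (f : H n → ℝ) (E : H n → H n) (x : H n) (D : ℝ) : Prop :=
  Tendsto (fun t : ℝ => (f (x + t • E x) - f x) / t) (nhdsWithin 0 {(0:ℝ)}ᶜ) (nhds D)

/-- `L : ℍⁿ → ℝ` is ℍ-linear: `L(xy) = L(x)+L(y)` and `L(δ_r x) = r L(x)` for `r > 0`. -/
def IsHLinear (L : H n → ℝ) : Prop :=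
  (∀ x y, L (Hmul n x y) = L x + L y) ∧ ∀ r : ℝ, 0 < r → ∀ x, L (dil n r x) = r * L x

/-- `f` is Pansu differentiable at `x` with (ℍ-linear) Pansu derivative `L`:
`lim_{y→x} |f(y) − f(x) − L(x⁻¹y)|/d(x,y) = 0`, where `x⁻¹ = −x`. -/
def PansuDiffAt (f : H n → ℝ) (x : H n) (L : H n → ℝ) : Prop :=
  IsHLinear n L ∧
  Tendsto (fun y => |f y - f x - L (Hmul n (-x) y)| / ccDist n x y)
    (nhdsWithin x {x}ᶜ) (nhds 0)

/-- `x ∈ ℚ^{2n+1}`: all coordinates rational. -/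
def isRat (x : H n) : Prop := ∀ k, ∃ q : ℚ, x k = (q : ℝ)

/-- Build the point `(a, b, c) ∈ ℍⁿ` from `a, b ∈ ℝⁿ` and `c ∈ ℝ`. -/
def mkH (a b : Fin n → ℝ) (c : ℝ) : H n := WithLp.toLp 2 <| fun k =>
  if h : (k : ℕ) < n then a ⟨k.1, h⟩
  else if h' : (k : ℕ) < 2*n then b ⟨k.1 - n, by omega⟩ else c

/-- First segment direction `(a − bc/L², b + ac/L², 0)` of the good curve to `y = (a,b,c)`. -/
def w₁ (y : H n) : H n :=
  mkH n (fun i => y (idx₁ n i) - y (idx₂ n i) * y (idxc n) / ‖proj n y‖^2)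
        (fun i => y (idx₂ n i) + y (idx₁ n i) * y (idxc n) / ‖proj n y‖^2) 0

/-- Second segment direction `(a + bc/L², b − ac/L², 2c)` of the good curve to `y = (a,b,c)`. -/
def w₂ (y : H n) : H n :=
  mkH n (fun i => y (idx₁ n i) + y (idx₂ n i) * y (idxc n) / ‖proj n y‖^2)
        (fun i => y (idx₂ n i) - y (idx₁ n i) * y (idxc n) / ‖proj n y‖^2) (2 * y (idxc n))

/-- The piecewise-linear horizontal curve `γ_y` joining `0` to `y`. -/
def goodCurve (y : H n) : ℝ → H n := fun t =>
  if t ≤ 1/2 then t • w₁ n y else (1/2 : ℝ) • w₁ n y + (t - 1/2) • w₂ n y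

end Heis

/-!
`γ` is the broken line through `P = w₁/2` at time `1/2` with velocities `w₁` and `w₂`.
A vector `v` is horizontal at `P` iff `v_c = 2 ω(v, P)`, where `ω` is the symplectic form of the
group law; since `ω(v, v) = 0`, along a line `P + u v` this condition does not depend on `u`.
It holds for `w₁` because `w₁` has no vertical part, and for `w₂` because `ω(w₂, w₁) = 2c`.
Both velocities have horizontal norm `L (1 + c²/L⁴)^{1/2}`, so running the broken line (or its
reversal) over `[s, t]` bounds `d(γ s, γ t)`; the bound on `γ'` is a computation of
`|wᵢ - (a, b, 0)|`.
-/

section BrokenLine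

variable {E : Type*} {m : ℝ} {v₁ v₂ : E}

def brokenSlope (m : ℝ) (v₁ v₂ : E) (u : ℝ) : E := if u ≤ m then v₁ else v₂

lemma brokenSlope_cases {p : E → Prop} (h₁ : p v₁) (h₂ : p v₂) (u : ℝ) :
    p (brokenSlope m v₁ v₂ u) := by
  unfold brokenSlope
  split_ifs
  exacts [h₁, h₂]

variable [NormedAddCommGroup E] [NormedSpace ℝ E] {P : E}

def brokenLine (m : ℝ) (P v₁ v₂ : E) (u : ℝ) : E := P + (u - m) • brokenSlope m v₁ v₂ u

lemma brokenLine_eq_ite :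
    brokenLine m P v₁ v₂ = fun u => if u ≤ m then P + (u - m) • v₁ else P + (u - m) • v₂ := by
  funext u
  simp only [brokenLine, brokenSlope]
  split_ifs <;> rfl

lemma brokenLine_comp_sub (c u : ℝ) :
    brokenLine m P v₁ v₂ (c - u) = brokenLine (c - m) P (-v₂) (-v₁) u := by
  simp only [brokenLine_eq_ite]
  by_cases h₁ : c - u ≤ m <;> by_cases h₂ : u ≤ c - m
  · rw [if_pos h₁, if_pos h₂, show c - u - m = 0 by linarith, show u - (c - m) = 0 by linarith]
    simp
  · rw [if_pos h₁, if_neg h₂]; module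
  · rw [if_neg h₁, if_pos h₂]; module
  · exact absurd (by linarith) h₁

lemma continuous_brokenLine : Continuous (brokenLine m P v₁ v₂) := by
  rw [brokenLine_eq_ite]
  refine Continuous.if_le (by fun_prop) (by fun_prop) continuous_id continuous_const ?_
  intro u hu
  simp [hu]

lemma hasDerivAt_brokenLine {u : ℝ} (hu : u ≠ m) :
    HasDerivAt (brokenLine m P v₁ v₂) (brokenSlope m v₁ v₂ u) u := by
  have hline : ∀ v : E, HasDerivAt (fun u : ℝ => P + (u - m) • v) v u := fun v => by
    simpa using (((hasDerivAt_id u).sub_const m).smul_const v).const_add P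
  rw [brokenLine_eq_ite]
  rcases hu.lt_or_gt with h | h
  · rw [brokenSlope, if_pos h.le]
    exact (hline v₁).congr_of_eventuallyEq
      (eventually_of_mem (Iio_mem_nhds h) fun x hx => if_pos (le_of_lt hx))
  · rw [brokenSlope, if_neg (not_le.2 h)]
    exact (hline v₂).congr_of_eventuallyEq
      (eventually_of_mem (Ioi_mem_nhds h) fun x hx => if_neg (not_le.2 hx))

lemma deriv_brokenLine_ae_eq :
    deriv (brokenLine m P v₁ v₂) =ᵐ[volume] brokenSlope m v₁ v₂ :=
  (volume.ae_ne m).mono fun _ hu => (hasDerivAt_brokenLine hu).deriv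

lemma intervalIntegrable_deriv_brokenLine (s t : ℝ) :
    IntervalIntegrable (deriv (brokenLine m P v₁ v₂)) volume s t := by
  refine IntervalIntegrable.congr_ae ?_ (ae_restrict_of_ae deriv_brokenLine_ae_eq.symm)
  rw [intervalIntegrable_iff]
  refine Integrable.mono' (g := fun _ => max ‖v₁‖ ‖v₂‖)
    (integrableOn_const measure_Ioc_lt_top.ne) ?_
    (ae_of_all _ (brokenSlope_cases (p := (‖·‖ ≤ _)) (le_max_left _ _) (le_max_right _ _)))
  exact (StronglyMeasurable.ite measurableSet_Iic stronglyMeasurable_const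
    stronglyMeasurable_const).aestronglyMeasurable

lemma integral_deriv_brokenLine [CompleteSpace E] (s t : ℝ) :
    ∫ u in s..t, deriv (brokenLine m P v₁ v₂) u = brokenLine m P v₁ v₂ t - brokenLine m P v₁ v₂ s :=
  integral_eq_of_hasDerivAt_off_countable _ _ (countable_singleton m)
    continuous_brokenLine.continuousOn
    (fun _ hu => (hasDerivAt_brokenLine hu.2).differentiableAt.hasDerivAt)
    (intervalIntegrable_deriv_brokenLine s t)

end BrokenLine

namespace Heis

variable {n : ℕ}

lemma sum_fin_two_mul_add_one (f : Fin (2*n+1) → ℝ) :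
    ∑ k, f k = ∑ i : Fin n, f (idx₁ n i) + ∑ i : Fin n, f (idx₂ n i) + f (idxc n) := by
  have h : 2*n+1 = n+n+1 := by omega
  rw [← Fintype.sum_equiv (finCongr h.symm) (fun k => f (finCongr h.symm k)) f (fun k => rfl),
    Fin.sum_univ_castSucc, Fin.sum_univ_add]
  refine congrArg₂ (· + ·) (congrArg₂ (· + ·) ?_ ?_) ?_
  · exact Finset.sum_congr rfl fun i _ => congrArg f (Fin.ext (by simp [idx₁]))
  · exact Finset.sum_congr rfl fun i _ => congrArg f (Fin.ext (by simp [idx₂, Nat.add_comm]))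
  · exact congrArg f (Fin.ext (by simp [idxc, Nat.two_mul]))

lemma sum_fin_two_mul (f : Fin (2*n) → ℝ) :
    ∑ k, f k = ∑ i : Fin n, f ⟨i.1, by omega⟩ + ∑ i : Fin n, f ⟨n + i.1, by omega⟩ := by
  have h : 2*n = n+n := by omega
  rw [← Fintype.sum_equiv (finCongr h.symm) (fun k => f (finCongr h.symm k)) f (fun k => rfl),
    Fin.sum_univ_add]
  refine congrArg₂ (· + ·) ?_ ?_
  · exact Finset.sum_congr rfl fun i _ => congrArg f (Fin.ext (by simp))
  · exact Finset.sum_congr rfl fun i _ => congrArg f (Fin.ext (by simp [Nat.add_comm]))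

@[simp] lemma idx₁_inj {i j : Fin n} : idx₁ n i = idx₁ n j ↔ i = j := by
  simp [idx₁, Fin.ext_iff]

@[simp] lemma idx₂_inj {i j : Fin n} : idx₂ n i = idx₂ n j ↔ i = j := by
  simp [idx₂, Fin.ext_iff]

@[simp] lemma idx₁_ne_idx₂ (i j : Fin n) : idx₁ n i ≠ idx₂ n j :=
  Fin.ne_of_val_ne (show (i : ℕ) ≠ n + j by omega)

@[simp] lemma idx₁_ne_idxc (i : Fin n) : idx₁ n i ≠ idxc n :=
  Fin.ne_of_val_ne (show (i : ℕ) ≠ 2 * n by omega)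

@[simp] lemma idx₂_ne_idxc (i : Fin n) : idx₂ n i ≠ idxc n :=
  Fin.ne_of_val_ne (show n + (i : ℕ) ≠ 2 * n by omega)

lemma ext_idx {x z : H n} (h₁ : ∀ i, x (idx₁ n i) = z (idx₁ n i))
    (h₂ : ∀ i, x (idx₂ n i) = z (idx₂ n i)) (hc : x (idxc n) = z (idxc n)) : x = z := by
  ext k
  by_cases h : k.1 < n
  · exact h₁ ⟨k.1, h⟩
  · by_cases h' : k.1 < 2*n
    · have hk : k = idx₂ n ⟨k.1 - n, by omega⟩ := Fin.ext (show k.1 = n + (k.1 - n) by omega)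
      rw [hk]; exact h₂ _
    · have hk : k = idxc n := Fin.ext (show k.1 = 2 * n by omega)
      rw [hk]; exact hc

@[simp] lemma mkH_idx₁ (a b : Fin n → ℝ) (c : ℝ) (i : Fin n) : mkH n a b c (idx₁ n i) = a i := by
  simp [mkH, idx₁]

@[simp] lemma mkH_idx₂ (a b : Fin n → ℝ) (c : ℝ) (i : Fin n) : mkH n a b c (idx₂ n i) = b i := by
  simp [mkH, idx₂, show ¬ 2 * n ≤ n + i by omega]

@[simp] lemma mkH_idxc (a b : Fin n → ℝ) (c : ℝ) : mkH n a b c (idxc n) = c := by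
  simp [mkH, idxc, show ¬ 2 * n < n by omega]

lemma norm_sq_eq (x : H n) :
    ‖x‖ ^ 2 = ∑ i, (x (idx₁ n i) ^ 2 + x (idx₂ n i) ^ 2) + x (idxc n) ^ 2 := by
  rw [EuclideanSpace.real_norm_sq_eq, sum_fin_two_mul_add_one, Finset.sum_add_distrib]

lemma norm_proj_sq_eq (x : H n) :
    ‖proj n x‖ ^ 2 = ∑ i, (x (idx₁ n i) ^ 2 + x (idx₂ n i) ^ 2) := by
  rw [EuclideanSpace.real_norm_sq_eq, sum_fin_two_mul, Finset.sum_add_distrib]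
  rfl

lemma sum_eq_mul_norm_proj_sq (y : H n) {f : Fin n → ℝ} (r : ℝ)
    (hf : ∀ i, f i = r * (y (idx₁ n i) ^ 2 + y (idx₂ n i) ^ 2)) :
    ∑ i, f i = r * ‖proj n y‖ ^ 2 := by
  rw [Finset.sum_congr rfl fun i _ => hf i, ← Finset.mul_sum, norm_proj_sq_eq]

@[simp] lemma proj_zero : proj n 0 = 0 := by
  ext k; simp [proj]

@[simp] lemma proj_neg (x : H n) : proj n (-x) = -proj n x := by
  ext k; simp [proj]

def symp (v P : H n) : ℝ := ∑ i, (v (idx₁ n i) * P (idx₂ n i) - v (idx₂ n i) * P (idx₁ n i))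

lemma symp_self (v : H n) : symp v v = 0 := by
  simp [symp, mul_comm]

lemma symp_smul_right (v P : H n) (t : ℝ) : symp v (t • P) = t * symp v P := by
  simp only [symp, PiLp.smul_apply, smul_eq_mul, Finset.mul_sum]
  exact Finset.sum_congr rfl fun _ _ => by ring

lemma symp_add_right (v P Q : H n) : symp v (P + Q) = symp v P + symp v Q := by
  simp only [symp, PiLp.add_apply, ← Finset.sum_add_distrib]
  exact Finset.sum_congr rfl fun _ _ => by ring

lemma symp_neg_left (v P : H n) : symp (-v) P = -symp v P := by
  simp only [symp, PiLp.neg_apply, ← Finset.sum_neg_distrib]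
  exact Finset.sum_congr rfl fun _ _ => by ring

/-- `v` is horizontal at `P`, i.e. it lies in the span of the `X_i(P), Y_i(P)`. -/
def HorizontalAt (P v : H n) : Prop := v (idxc n) = 2 * symp v P

lemma HorizontalAt.eq_sum {P v : H n} (h : HorizontalAt P v) :
    v = ∑ i, (v (idx₁ n i) • Xvf n i P + v (idx₂ n i) • Yvf n i P) := by
  apply ext_idx
  · intro j
    simp [Xvf, Yvf, Pi.single_apply]
  · intro j
    simp [Xvf, Yvf, Pi.single_apply]
  · rw [h, symp, Finset.mul_sum, WithLp.ofLp_sum, Finset.sum_apply]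
    refine Finset.sum_congr rfl fun i _ => ?_
    simp only [Xvf, Yvf, PiLp.add_apply, PiLp.sub_apply, PiLp.smul_apply, smul_eq_mul, ne_eq,
      idx₁_ne_idxc, idx₂_ne_idxc, not_false_eq_true, PiLp.single_eq_of_ne', PiLp.single_eq_same]
    ring

lemma horizontalAt_add_smul_self {P v : H n} (t : ℝ) :
    HorizontalAt (P + t • v) v ↔ HorizontalAt P v := by
  simp only [HorizontalAt, symp_add_right, symp_smul_right, symp_self, mul_zero, add_zero]

lemma HorizontalAt.neg {P v : H n} (h : HorizontalAt P v) : HorizontalAt P (-v) := by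
  rw [HorizontalAt, symp_neg_left, PiLp.neg_apply, h]
  ring

lemma horizontalAt_zero (P : H n) : HorizontalAt P 0 := by
  simp [HorizontalAt, symp]

lemma isHorizontalCurve_brokenLine {m : ℝ} {P v₁ v₂ : H n} (h₁ : HorizontalAt P v₁)
    (h₂ : HorizontalAt P v₂) (I : Set ℝ) : IsHorizontalCurve n I (brokenLine m P v₁ v₂) := by
  have hm : ∀ᵐ u ∂volume.restrict I, u ≠ m := ae_restrict_of_ae (volume.ae_ne m)
  refine ⟨⟨hm.mono fun u hu => (hasDerivAt_brokenLine hu).differentiableAt,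
    fun s _ t _ => ⟨intervalIntegrable_deriv_brokenLine s t,
      (integral_deriv_brokenLine s t).symm⟩⟩,
    fun u k => brokenSlope m v₁ v₂ u ⟨k.1, by omega⟩, hm.mono fun u hu => ?_⟩
  have hslope := (horizontalAt_add_smul_self (u - m)).2 (brokenSlope_cases (m := m) h₁ h₂ u)
  rw [horizCondition, (hasDerivAt_brokenLine hu).deriv]
  exact hslope.eq_sum

lemma hLength_brokenLine {m N s t : ℝ} {P v₁ v₂ : H n} (h₁ : ‖proj n v₁‖ = N)
    (h₂ : ‖proj n v₂‖ = N) (hst : s ≤ t) :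
    hLength n (Icc s t) (brokenLine m P v₁ v₂) = N * (t - s) := by
  rw [hLength, integral_congr_ae (g := fun _ => N)
    ((ae_restrict_of_ae deriv_brokenLine_ae_eq).mono fun u hu => by
      rw [hu]; exact brokenSlope_cases (p := fun v => ‖proj n v‖ = N) h₁ h₂ u),
    setIntegral_const, Real.volume_real_Icc_of_le hst, smul_eq_mul, mul_comm]

lemma ccDist_le_hLength {s t : ℝ} (hst : s < t) {γ : ℝ → H n}
    (hγ : IsHorizontalCurve n (Icc s t) γ) : ccDist n (γ s) (γ t) ≤ hLength n (Icc s t) γ := by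
  refine csInf_le ⟨0, ?_⟩ ⟨s, t, γ, hst, hγ, rfl, rfl, rfl⟩
  rintro _ ⟨a, b, σ, -, -, -, -, rfl⟩
  exact integral_nonneg fun u => norm_nonneg _

lemma ccDist_brokenLine_le_of_lt {m N s t : ℝ} {P v₁ v₂ : H n} (h₁ : HorizontalAt P v₁)
    (h₂ : HorizontalAt P v₂) (hN₁ : ‖proj n v₁‖ = N) (hN₂ : ‖proj n v₂‖ = N) (hst : s < t) :
    ccDist n (brokenLine m P v₁ v₂ s) (brokenLine m P v₁ v₂ t) ≤ N * (t - s) :=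
  hLength_brokenLine hN₁ hN₂ hst.le ▸
    ccDist_le_hLength hst (isHorizontalCurve_brokenLine h₁ h₂ _)

lemma ccDist_self_le_zero (x : H n) : ccDist n x x ≤ 0 := by
  have hx : ∀ u, brokenLine 0 x 0 0 u = x := fun u => by simp [brokenLine, brokenSlope]
  simpa [hx] using ccDist_brokenLine_le_of_lt (m := 0) (horizontalAt_zero x)
    (horizontalAt_zero x) (by simp) (by simp) zero_lt_one

lemma ccDist_brokenLine_le {m N : ℝ} {P v₁ v₂ : H n} (h₁ : HorizontalAt P v₁)
    (h₂ : HorizontalAt P v₂) (hN₁ : ‖proj n v₁‖ = N) (hN₂ : ‖proj n v₂‖ = N) (s t : ℝ) :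
    ccDist n (brokenLine m P v₁ v₂ s) (brokenLine m P v₁ v₂ t) ≤ N * |s - t| := by
  rcases lt_trichotomy s t with hst | rfl | hts
  · rw [abs_sub_comm, abs_of_pos (sub_pos.2 hst)]
    exact ccDist_brokenLine_le_of_lt h₁ h₂ hN₁ hN₂ hst
  · simpa using ccDist_self_le_zero _
  · -- the same broken line, run backwards on `[t, s]`
    have hrev : ∀ u, brokenLine m P v₁ v₂ u = brokenLine (s + t - m) P (-v₂) (-v₁) (s + t - u) :=
      fun u => by rw [← brokenLine_comp_sub, sub_sub_cancel]
    rw [hrev s, hrev t, add_sub_cancel_right, add_sub_cancel_left, abs_of_pos (sub_pos.2 hts)]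
    exact ccDist_brokenLine_le_of_lt h₂.neg h₁.neg (by simpa using hN₂) (by simpa using hN₁) hts

section GoodCurve

variable (y : H n)

lemma w₁_add_w₂ : w₁ n y + w₂ n y = (2 : ℝ) • y := by
  apply ext_idx <;> intros <;>
    simp only [w₁, w₂, PiLp.add_apply, PiLp.smul_apply, smul_eq_mul, mkH_idx₁, mkH_idx₂,
      mkH_idxc] <;>
    ring

lemma goodCurve_eq_brokenLine :
    goodCurve n y = brokenLine (1/2) ((1/2 : ℝ) • w₁ n y) (w₁ n y) (w₂ n y) := by
  funext u
  simp only [goodCurve, brokenLine, brokenSlope]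
  split_ifs <;> module

lemma goodCurve_zero : goodCurve n y 0 = 0 := by
  simp [goodCurve]

lemma goodCurve_one : goodCurve n y 1 = y := by
  rw [goodCurve, if_neg (by norm_num), show (1 : ℝ) - 1/2 = 1/2 by norm_num, ← smul_add,
    w₁_add_w₂, smul_smul]
  norm_num

variable {y}

lemma symp_w₂_w₁ (hy : proj n y ≠ 0) : symp (w₂ n y) (w₁ n y) = 2 * y (idxc n) := by
  rw [symp, sum_eq_mul_norm_proj_sq y (2 * y (idxc n) / ‖proj n y‖ ^ 2) fun i => by
    simp only [w₁, w₂, mkH_idx₁, mkH_idx₂]; ring]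
  field_simp [norm_ne_zero_iff.2 hy]

lemma horizontalAt_w₁ : HorizontalAt ((1/2 : ℝ) • w₁ n y) (w₁ n y) := by
  simp [HorizontalAt, symp_smul_right, symp_self, w₁]

lemma horizontalAt_w₂ (hy : proj n y ≠ 0) : HorizontalAt ((1/2 : ℝ) • w₁ n y) (w₂ n y) := by
  rw [HorizontalAt, symp_smul_right, symp_w₂_w₁ hy]
  simp [w₂]

lemma norm_proj_w₁_sq :
    ‖proj n (w₁ n y)‖ ^ 2 = (1 + y (idxc n) ^ 2 / ‖proj n y‖ ^ 4) * ‖proj n y‖ ^ 2 :=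
  (norm_proj_sq_eq _).trans <| sum_eq_mul_norm_proj_sq y _ fun i => by
    simp only [w₁, mkH_idx₁, mkH_idx₂]; ring

lemma norm_proj_w₂_sq :
    ‖proj n (w₂ n y)‖ ^ 2 = (1 + y (idxc n) ^ 2 / ‖proj n y‖ ^ 4) * ‖proj n y‖ ^ 2 :=
  (norm_proj_sq_eq _).trans <| sum_eq_mul_norm_proj_sq y _ fun i => by
    simp only [w₂, mkH_idx₁, mkH_idx₂]; ring

lemma norm_proj_w₂ : ‖proj n (w₂ n y)‖ = ‖proj n (w₁ n y)‖ := by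
  rw [← sq_eq_sq₀ (norm_nonneg _) (norm_nonneg _), norm_proj_w₁_sq, norm_proj_w₂_sq]

lemma norm_proj_w₁_le (hy : proj n y ≠ 0) :
    ‖proj n (w₁ n y)‖ ≤ ‖proj n y‖ * √(1 + y (idxc n) ^ 2 / ‖proj n y‖ ^ 4
      + 4 * y (idxc n) ^ 2 / ‖proj n y‖ ^ 2) := by
  have hL : ‖proj n y‖ ≠ 0 := norm_ne_zero_iff.2 hy
  rw [← sq_le_sq₀ (norm_nonneg _) (by positivity), mul_pow, Real.sq_sqrt (by positivity),
    norm_proj_w₁_sq]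
  have hexpand : ‖proj n y‖ ^ 2 * (1 + y (idxc n) ^ 2 / ‖proj n y‖ ^ 4
      + 4 * y (idxc n) ^ 2 / ‖proj n y‖ ^ 2)
      = (1 + y (idxc n) ^ 2 / ‖proj n y‖ ^ 4) * ‖proj n y‖ ^ 2 + 4 * y (idxc n) ^ 2 := by
    field_simp
  rw [hexpand]
  linarith [sq_nonneg (y (idxc n))]

lemma norm_w₁_sub_sq (hy : proj n y ≠ 0) :
    ‖w₁ n y - mkH n (fun i => y (idx₁ n i)) (fun i => y (idx₂ n i)) 0‖ ^ 2
      = y (idxc n) ^ 2 / ‖proj n y‖ ^ 2 := by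
  rw [norm_sq_eq, sum_eq_mul_norm_proj_sq y (y (idxc n) ^ 2 / ‖proj n y‖ ^ 4) fun i => by
    simp only [w₁, PiLp.sub_apply, mkH_idx₁, mkH_idx₂]; ring]
  simp only [PiLp.sub_apply, w₁, mkH_idxc, sub_zero]
  field_simp [norm_ne_zero_iff.2 hy]
  ring

lemma norm_w₂_sub_sq (hy : proj n y ≠ 0) :
    ‖w₂ n y - mkH n (fun i => y (idx₁ n i)) (fun i => y (idx₂ n i)) 0‖ ^ 2
      = y (idxc n) ^ 2 / ‖proj n y‖ ^ 2 + 4 * y (idxc n) ^ 2 := by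
  rw [norm_sq_eq, sum_eq_mul_norm_proj_sq y (y (idxc n) ^ 2 / ‖proj n y‖ ^ 4) fun i => by
    simp only [w₂, PiLp.sub_apply, mkH_idx₁, mkH_idx₂]; ring]
  simp only [PiLp.sub_apply, w₂, mkH_idxc]
  field_simp [norm_ne_zero_iff.2 hy]
  ring

lemma norm_brokenSlope_sub_le (hy : proj n y ≠ 0) (t : ℝ) :
    ‖brokenSlope (1/2) (w₁ n y) (w₂ n y) t
        - mkH n (fun i => y (idx₁ n i)) (fun i => y (idx₂ n i)) 0‖
      ≤ |y (idxc n)| / ‖proj n y‖ * √(1 + 4 * ‖proj n y‖ ^ 2) := by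
  have hbound : (|y (idxc n)| / ‖proj n y‖ * √(1 + 4 * ‖proj n y‖ ^ 2)) ^ 2
      = y (idxc n) ^ 2 / ‖proj n y‖ ^ 2 + 4 * y (idxc n) ^ 2 := by
    rw [mul_pow, div_pow, sq_abs, Real.sq_sqrt (by positivity)]
    field_simp [norm_ne_zero_iff.2 hy]
  rw [← sq_le_sq₀ (norm_nonneg _) (by positivity), hbound, brokenSlope]
  split_ifs
  · rw [norm_w₁_sub_sq hy]
    linarith [sq_nonneg (y (idxc n))]
  · rw [norm_w₂_sub_sq hy]

end GoodCurve

end Heis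

open Heis

theorem statement5_general (n : ℕ) (y : H n) (hy : Heis.proj n y ≠ 0) :
    Heis.IsHorizontalCurve n (Set.Icc 0 1) (Heis.goodCurve n y) ∧
    Heis.goodCurve n y 0 = 0 ∧ Heis.goodCurve n y 1 = y ∧
    (∀ s ∈ Set.Icc (0:ℝ) 1, ∀ t ∈ Set.Icc (0:ℝ) 1,
      Heis.ccDist n (Heis.goodCurve n y s) (Heis.goodCurve n y t) ≤
        ‖Heis.proj n y‖ * Real.sqrt (1 + (y (Heis.idxc n))^2 / ‖Heis.proj n y‖^4
          + 4 * (y (Heis.idxc n))^2 / ‖Heis.proj n y‖^2) * |s - t|) ∧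
    (∀ t ∈ Set.Icc (0:ℝ) 1 \ {(1:ℝ)/2}, ∃ g' : H n,
      HasDerivAt (Heis.goodCurve n y) g' t ∧
      ‖g' - Heis.mkH n (fun i => y (Heis.idx₁ n i)) (fun i => y (Heis.idx₂ n i)) 0‖ ≤
        |y (Heis.idxc n)| / ‖Heis.proj n y‖ * Real.sqrt (1 + 4 * ‖Heis.proj n y‖^2)) := by
  refine ⟨?_, goodCurve_zero y, goodCurve_one y, fun s _ t _ => ?_, fun t ht => ?_⟩ <;>
    rw [goodCurve_eq_brokenLine]
  · exact isHorizontalCurve_brokenLine horizontalAt_w₁ (horizontalAt_w₂ hy) _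
  · calc _ ≤ ‖proj n (w₁ n y)‖ * |s - t| :=
          ccDist_brokenLine_le horizontalAt_w₁ (horizontalAt_w₂ hy) rfl norm_proj_w₂ s t
      _ ≤ _ := mul_le_mul_of_nonneg_right (norm_proj_w₁_le hy) (abs_nonneg _)
  · exact ⟨_, hasDerivAt_brokenLine (by simpa using ht.2), norm_brokenSlope_sub_le hy t⟩

/-- Lemma `goodcurve`. For `y = (a,b,c) ∈ ℍⁿ` with `p(y) ≠ 0` and
`L = |p(y)|`, the explicit piecewise-linear curve `γ_y` is a Lipschitz horizontal curve
joining `0` to `y` with `Lip_ℍ(γ) ≤ L(1 + c²/L⁴ + 4c²/L²)^{1/2}`, and for all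
`t ∈ [0,1] \ {1/2}` the derivative `γ'(t)` exists with
`|γ'(t) − (a,b,0)| ≤ (|c|/L)(1 + 4L²)^{1/2}`. -/
theorem statement5 (n : ℕ) (hn : 0 < n) (y : H n) (hy : Heis.proj n y ≠ 0) :
    Heis.IsHorizontalCurve n (Set.Icc 0 1) (Heis.goodCurve n y) ∧
    Heis.goodCurve n y 0 = 0 ∧ Heis.goodCurve n y 1 = y ∧
    (∀ s ∈ Set.Icc (0:ℝ) 1, ∀ t ∈ Set.Icc (0:ℝ) 1,
      Heis.ccDist n (Heis.goodCurve n y s) (Heis.goodCurve n y t) ≤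
        ‖Heis.proj n y‖ * Real.sqrt (1 + (y (Heis.idxc n))^2 / ‖Heis.proj n y‖^4
          + 4 * (y (Heis.idxc n))^2 / ‖Heis.proj n y‖^2) * |s - t|) ∧
    (∀ t ∈ Set.Icc (0:ℝ) 1 \ {(1:ℝ)/2}, ∃ g' : H n,
      HasDerivAt (Heis.goodCurve n y) g' t ∧
      ‖g' - Heis.mkH n (fun i => y (Heis.idx₁ n i)) (fun i => y (Heis.idx₂ n i)) 0‖ ≤
        |y (Heis.idxc n)| / ‖Heis.proj n y‖ * Real.sqrt (1 + 4 * ‖Heis.proj n y‖^2)) :=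
  statement5_general n y hy
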